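/- arXiv:2005.06141 — 2 statements merged into one kernel-verified Lean document; each statement's English description precedes it below -/
import Mathlib

section
/- Let p, q be integers with p ≥ 1 and q ≥ 1, and let f : ℤ × ℤ → ℤ × ℤ be the ℤ-linear map with matrix [[1+q, p−1],[q−1, 1+p]], i.e. f(x,y) = ((1+q)x + (p−1)y, (q−1)x + (1+p)y). Then f is injective, and the cokernel (ℤ × ℤ)/im f is isomorphic as an abelian group to (ℤ/2ℤ) × (ℤ/(p+q)ℤ) if p and q are both odd, and to ℤ/2(p+q)ℤ if p·q is even. -/
/-- The additive hom `(x, y) ↦ a*x + b*y`. -/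
def bsL (a b : ℤ) : ℤ × ℤ →+ ℤ where
  toFun v := a * v.1 + b * v.2
  map_zero' := by simp
  map_add' v w := by simp [Prod.fst_add, Prod.snd_add]; ring

@[simp] lemma bsL_apply (a b x y : ℤ) : bsL a b (x, y) = a * x + b * y := rfl

/-- Cokernel computation when `q` is odd: cokernel ≃ ℤ/2 × ℤ/(p+q). -/
lemma bs_aux_odd (p q m : ℤ) (hm : q = 2 * m + 1)
    (f : ℤ × ℤ →+ ℤ × ℤ)
    (hf : ∀ x y : ℤ, f (x, y) = ((1 + q) * x + (p - 1) * y, (q - 1) * x + (1 + p) * y)) :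
    Nonempty (((ℤ × ℤ) ⧸ f.range) ≃+
      (ℤ ⧸ AddSubgroup.zmultiples (2 : ℤ)) × (ℤ ⧸ AddSubgroup.zmultiples (p + q))) := by
  set φ : ℤ × ℤ →+ (ℤ ⧸ AddSubgroup.zmultiples (2 : ℤ)) × (ℤ ⧸ AddSubgroup.zmultiples (p + q)) :=
    ((QuotientAddGroup.mk' (AddSubgroup.zmultiples (2 : ℤ))).comp (bsL (-1) 1)).prod
      ((QuotientAddGroup.mk' (AddSubgroup.zmultiples (p + q))).comp (bsL (-m) (m + 1))) with hφ
  have hsurj : Function.Surjective φ := by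
    rintro ⟨a, b⟩
    obtain ⟨c, rfl⟩ := QuotientAddGroup.mk'_surjective _ a
    obtain ⟨d, rfl⟩ := QuotientAddGroup.mk'_surjective _ b
    refine ⟨(-(m + 1) * c + d, -m * c + d), ?_⟩
    have h1 : (-1 : ℤ) * (-(m + 1) * c + d) + 1 * (-m * c + d) = c := by ring
    have h2 : (-m : ℤ) * (-(m + 1) * c + d) + (m + 1) * (-m * c + d) = d := by ring
    simp only [hφ, AddMonoidHom.prod_apply, AddMonoidHom.comp_apply, bsL_apply, h1, h2]
  have hker : f.range = φ.ker := by
    ext v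
    obtain ⟨x, y⟩ := v
    simp only [AddMonoidHom.mem_range, AddMonoidHom.mem_ker, hφ, AddMonoidHom.prod_apply,
      AddMonoidHom.comp_apply, bsL_apply, Prod.mk_eq_zero, QuotientAddGroup.mk'_apply,
      QuotientAddGroup.eq_zero_iff, Int.mem_zmultiples_iff]
    constructor
    · rintro ⟨⟨a, b⟩, hab⟩
      rw [hf] at hab
      simp only [Prod.mk.injEq] at hab
      obtain ⟨h1, h2⟩ := hab
      constructor
      · exact ⟨-a + b, by linear_combination h1 - h2⟩
      · exact ⟨b, by linear_combination m * h1 - (m + 1) * h2 + (a - b) * hm⟩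
    · rintro ⟨⟨s, hs⟩, ⟨t, ht⟩⟩
      refine ⟨(t - s, t), ?_⟩
      rw [hf]
      simp only [Prod.mk.injEq]
      constructor
      · linear_combination (m + 1) * hs - ht - s * hm
      · linear_combination m * hs - ht - s * hm
  exact ⟨(QuotientAddGroup.quotientAddEquivOfEq hker).trans
    (QuotientAddGroup.quotientKerEquivOfSurjective φ hsurj)⟩

/-- Cokernel computation when `q` is even: cokernel ≃ ℤ/2(p+q). -/
lemma bs_aux_even (p q m : ℤ) (hm : q = 2 * m)
    (f : ℤ × ℤ →+ ℤ × ℤ)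
    (hf : ∀ x y : ℤ, f (x, y) = ((1 + q) * x + (p - 1) * y, (q - 1) * x + (1 + p) * y)) :
    Nonempty (((ℤ × ℤ) ⧸ f.range) ≃+
      (ℤ ⧸ AddSubgroup.zmultiples (2 * (p + q)))) := by
  set φ : ℤ × ℤ →+ ℤ ⧸ AddSubgroup.zmultiples (2 * (p + q)) :=
    (QuotientAddGroup.mk' (AddSubgroup.zmultiples (2 * (p + q)))).comp (bsL (1 - q) (1 + q))
    with hφ
  have hsurj : Function.Surjective φ := by
    rintro a
    obtain ⟨c, rfl⟩ := QuotientAddGroup.mk'_surjective _ a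
    refine ⟨(-m * c, (1 - m) * c), ?_⟩
    have h1 : (1 - q) * (-m * c) + (1 + q) * ((1 - m) * c) = c := by
      linear_combination c * hm
    simp only [hφ, AddMonoidHom.comp_apply, bsL_apply, h1]
  have hker : f.range = φ.ker := by
    ext v
    obtain ⟨x, y⟩ := v
    simp only [AddMonoidHom.mem_range, AddMonoidHom.mem_ker, hφ,
      AddMonoidHom.comp_apply, bsL_apply, QuotientAddGroup.mk'_apply,
      QuotientAddGroup.eq_zero_iff, Int.mem_zmultiples_iff]
    constructor
    · rintro ⟨⟨a, b⟩, hab⟩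
      rw [hf] at hab
      simp only [Prod.mk.injEq] at hab
      obtain ⟨h1, h2⟩ := hab
      exact ⟨b, by linear_combination (q - 1) * h1 - (1 + q) * h2⟩
    · rintro ⟨t, ht⟩
      refine ⟨((1 - m) * x + m * y + (1 - p - q) * t, t), ?_⟩
      rw [hf]
      simp only [Prod.mk.injEq]
      constructor
      · linear_combination m * ht + (x - (p + q) * t) * hm
      · linear_combination (m - 1) * ht + (y - (p + q) * t) * hm
  exact ⟨(QuotientAddGroup.quotientAddEquivOfEq hker).trans
    (QuotientAddGroup.quotientKerEquivOfSurjective φ hsurj)⟩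

/-- CRT for `ℤ ⧸ zmultiples`: if `n` is odd then `ℤ/2n ≃ ℤ/2 × ℤ/n`. -/
lemma bs_crt (n k : ℤ) (hk : n = 2 * k + 1) :
    Nonempty ((ℤ ⧸ AddSubgroup.zmultiples (2 * n)) ≃+
      (ℤ ⧸ AddSubgroup.zmultiples (2 : ℤ)) × (ℤ ⧸ AddSubgroup.zmultiples n)) := by
  set ψ : ℤ →+ (ℤ ⧸ AddSubgroup.zmultiples (2 : ℤ)) × (ℤ ⧸ AddSubgroup.zmultiples n) :=
    (QuotientAddGroup.mk' (AddSubgroup.zmultiples (2 : ℤ))).prod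
      (QuotientAddGroup.mk' (AddSubgroup.zmultiples n)) with hψ
  have hsurj : Function.Surjective ψ := by
    rintro ⟨a, b⟩
    obtain ⟨c, rfl⟩ := QuotientAddGroup.mk'_surjective _ a
    obtain ⟨d, rfl⟩ := QuotientAddGroup.mk'_surjective _ b
    refine ⟨d + n * (c - d), ?_⟩
    simp only [hψ, AddMonoidHom.prod_apply, QuotientAddGroup.mk'_apply, Prod.mk.injEq]
    constructor
    · rw [QuotientAddGroup.eq_iff_sub_mem, Int.mem_zmultiples_iff]
      exact ⟨k * (c - d), by linear_combination (c - d) * hk⟩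
    · rw [QuotientAddGroup.eq_iff_sub_mem, Int.mem_zmultiples_iff]
      exact ⟨c - d, by ring⟩
  have hker : AddSubgroup.zmultiples (2 * n) = ψ.ker := by
    ext c
    simp only [AddMonoidHom.mem_ker, hψ, AddMonoidHom.prod_apply, QuotientAddGroup.mk'_apply,
      Prod.mk_eq_zero, QuotientAddGroup.eq_zero_iff, Int.mem_zmultiples_iff]
    constructor
    · rintro ⟨t, ht⟩
      exact ⟨⟨n * t, by linear_combination ht⟩, ⟨2 * t, by linear_combination ht⟩⟩
    · rintro ⟨⟨s, hs⟩, ⟨t, ht⟩⟩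
      exact ⟨s - k * t, by linear_combination n * hs - 2 * k * ht - c * hk⟩
  exact ⟨(QuotientAddGroup.quotientAddEquivOfEq hker).trans
    (QuotientAddGroup.quotientKerEquivOfSurjective ψ hsurj)⟩

/-- K₁ computation for Baumslag–Solitar groups `BS(n,m)` with `mn < 0`: for `p, q ≥ 1`
and the ℤ-linear map `f(x,y) = ((1+q)x + (p−1)y, (q−1)x + (1+p)y)` with matrix
`[[1+q, p−1],[q−1, 1+p]]`, the map `f` is injective and the cokernel is isomorphic to
`(ℤ/2ℤ) × (ℤ/(p+q)ℤ)` if `p` and `q` are both odd, and to `ℤ/2(p+q)ℤ` if `p·q` is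
even. -/
theorem bs_K1_matrix_neg (p q : ℤ) (hp : 1 ≤ p) (hq : 1 ≤ q)
    (f : ℤ × ℤ →+ ℤ × ℤ)
    (hf : ∀ x y : ℤ, f (x, y) = ((1 + q) * x + (p - 1) * y, (q - 1) * x + (1 + p) * y)) :
    Function.Injective f ∧
    ((Odd p ∧ Odd q) → Nonempty (((ℤ × ℤ) ⧸ f.range) ≃+
      (ℤ ⧸ AddSubgroup.zmultiples (2 : ℤ)) × (ℤ ⧸ AddSubgroup.zmultiples (p + q)))) ∧
    (Even (p * q) → Nonempty (((ℤ × ℤ) ⧸ f.range) ≃+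
      (ℤ ⧸ AddSubgroup.zmultiples (2 * (p + q))))) := by
  refine ⟨?_, ?_, ?_⟩
  · rw [injective_iff_map_eq_zero]
    rintro ⟨x, y⟩ h
    rw [hf] at h
    simp only [Prod.mk_eq_zero] at h
    obtain ⟨h1, h2⟩ := h
    have hx : 2 * (p + q) * x = 0 := by linear_combination (1 + p) * h1 - (p - 1) * h2
    have hy : 2 * (p + q) * y = 0 := by linear_combination -(q - 1) * h1 + (1 + q) * h2
    have hpq : (2 : ℤ) * (p + q) ≠ 0 := by
      intro h0
      omega
    have hx0 : x = 0 := by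
      rcases mul_eq_zero.mp hx with h | h
      · exact absurd h hpq
      · exact h
    have hy0 : y = 0 := by
      rcases mul_eq_zero.mp hy with h | h
      · exact absurd h hpq
      · exact h
    simp [hx0, hy0]
  · rintro ⟨-, hqo⟩
    obtain ⟨m, hm⟩ := hqo
    exact bs_aux_odd p q m hm f hf
  · intro hev
    rcases Int.even_or_odd q with hqe | hqo
    · obtain ⟨m, hm⟩ := hqe
      exact bs_aux_even p q m (by omega) f hf
    · have hpe : Even p := by
        rcases Int.even_mul.mp hev with h | h
        · exact h
        · exact absurd h (Int.not_even_iff_odd.mpr hqo)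
      obtain ⟨a, ha⟩ := hpe
      obtain ⟨m, hm⟩ := hqo
      obtain ⟨e1⟩ := bs_aux_odd p q m hm f hf
      obtain ⟨e2⟩ := bs_crt (p + q) (a + m) (by omega)
      exact ⟨e1.trans e2.symm⟩
end

section
/- Let G be a locally finite simple graph on a vertex set V that is a tree (connected and acyclic) in which every vertex has at least two neighbours. Then for any two vertices x and y, the boundaries x∂G and y∂G are homeomorphic. -/
/-- The boundary `x∂G` of a graph `G` at a vertex `x`: the set of non-backtracking
infinite paths starting at `x`, as a subset of the product space `ℕ → V`. -/
def graphBoundary {V : Type*} (G : SimpleGraph V) (x : V) : Set (ℕ → V) :=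
  {v | v 0 = x ∧ (∀ n : ℕ, G.Adj (v n) (v (n + 1))) ∧ ∀ n : ℕ, v (n + 2) ≠ v n}

/-!
Moving the basepoint across an edge `x y` is a homeomorphism of boundaries: a ray from `x`
either passes through `y` next, and then dropping `x` gives a ray from `y`, or it does not,
and then prepending `y` gives a ray from `y`. Both operations only read finitely many
coordinates, so they are continuous, and the same recipe for the edge `y x` inverts them.
Composing along a path joins any two vertices of a connected graph.
-/

namespace graphBoundary

variable {V : Type*} {G : SimpleGraph V} {x y : V}

open Classical in
noncomputable def reroot (y : V) (v : ℕ → V) : ℕ → V :=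
  if v 1 = y then Stream'.tail v else Stream'.cons y v

theorem reroot_of_apply_one_eq {v : ℕ → V} (h : v 1 = y) : reroot y v = Stream'.tail v :=
  if_pos h

theorem reroot_of_apply_one_ne {v : ℕ → V} (h : v 1 ≠ y) : reroot y v = Stream'.cons y v :=
  if_neg h

theorem reroot_mapsTo (hxy : G.Adj x y) :
    Set.MapsTo (reroot y) (graphBoundary G x) (graphBoundary G y) := by
  rintro v ⟨hv0, hadj, hnb⟩
  by_cases hv1 : v 1 = y
  · rw [reroot_of_apply_one_eq hv1]
    exact ⟨hv1, fun n => hadj (n + 1), fun n => hnb (n + 1)⟩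
  · rw [reroot_of_apply_one_ne hv1]
    refine ⟨rfl, ?_, ?_⟩
    · rintro (_ | n)
      · exact show G.Adj y (v 0) from hv0 ▸ hxy.symm
      · exact hadj n
    · rintro (_ | n)
      · exact show v 1 ≠ y from hv1
      · exact hnb n

theorem reroot_reroot {v : ℕ → V} (hv : v ∈ graphBoundary G x) :
    reroot x (reroot y v) = v := by
  obtain ⟨hv0, -, hnb⟩ := hv
  by_cases hv1 : v 1 = y
  · have hv2 : Stream'.tail v 1 ≠ x := hv0 ▸ hnb 0
    rw [reroot_of_apply_one_eq hv1, reroot_of_apply_one_ne hv2, ← hv0]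
    exact Stream'.eta v
  · rw [reroot_of_apply_one_ne hv1, reroot_of_apply_one_eq (v := Stream'.cons y v) hv0]
    exact Stream'.tail_cons y v

open Classical in
theorem continuous_reroot [TopologicalSpace V] [DiscreteTopology V] (y : V) :
    Continuous (reroot y) := by
  have hclopen : IsClopen {v : ℕ → V | v 1 = y} :=
    (isClopen_discrete {y}).preimage (continuous_apply 1)
  unfold reroot
  refine Continuous.if (by simp [hclopen.frontier_eq])
    (continuous_pi fun n => continuous_apply (n + 1)) (continuous_pi ?_)
  rintro (_ | n)
  · exact continuous_const
  · exact continuous_apply n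

noncomputable def homeomorphOfAdj [TopologicalSpace V] [DiscreteTopology V] (hxy : G.Adj x y) :
    graphBoundary G x ≃ₜ graphBoundary G y where
  toFun v := ⟨reroot y v, reroot_mapsTo hxy v.2⟩
  invFun w := ⟨reroot x w, reroot_mapsTo hxy.symm w.2⟩
  left_inv v := Subtype.ext (reroot_reroot v.2)
  right_inv w := Subtype.ext (reroot_reroot w.2)
  continuous_toFun := ((continuous_reroot y).comp continuous_subtype_val).subtype_mk _
  continuous_invFun := ((continuous_reroot x).comp continuous_subtype_val).subtype_mk _

theorem nonempty_homeomorph_of_reachable [TopologicalSpace V] [DiscreteTopology V]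
    (h : G.Reachable x y) : Nonempty (graphBoundary G x ≃ₜ graphBoundary G y) := by
  obtain ⟨p⟩ := h
  induction p with
  | nil => exact ⟨Homeomorph.refl _⟩
  | cons hadj _ ih => exact ⟨(homeomorphOfAdj hadj).trans ih.some⟩

end graphBoundary

theorem graphBoundary_basepoint_independent_general {V : Type*} [TopologicalSpace V]
    [DiscreteTopology V] (G : SimpleGraph V)
    (htree : G.IsTree)
    (x y : V) :
    Nonempty ((graphBoundary G x) ≃ₜ (graphBoundary G y)) :=
  graphBoundary.nonempty_homeomorph_of_reachable (htree.connected.preconnected x y)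

/-- For a locally finite nonsingular tree `G`, the boundaries at any two vertices
`x` and `y` are homeomorphic (the topology being the subspace topology from the
product `ℕ → V` with `V` discrete). -/
theorem graphBoundary_basepoint_independent {V : Type*} [TopologicalSpace V]
    [DiscreteTopology V] (G : SimpleGraph V)
    (hloc : ∀ v : V, (G.neighborSet v).Finite)
    (htree : G.IsTree)
    (hns : ∀ v : V, ∃ u w : V, u ≠ w ∧ G.Adj v u ∧ G.Adj v w)
    (x y : V) :
    Nonempty ((graphBoundary G x) ≃ₜ (graphBoundary G y)) :=
  graphBoundary_basepoint_independent_general G htree x y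
end
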